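/- arXiv:2105.04811 — 2 statements merged into one kernel-verified Lean document; each statement's English description precedes it below -/
import Mathlib

section
/- The linear change of variables v = 3V - W - X + Y + Z, w = 2V - 2X - 2Y + Z, x = -4V + 3X - Y - 3Z, y = -V + X + Y - Z, z = V - X + Z transforms the three quadrics V·X - V·Y + W·Y - X·Y + Y·Z, V² - V·W + W·X + W·Y + X·Y + V·Z - W·Z + X·Z, 2V·X + W·X - V·Y - X·Y - V·Z - W·Z + 2X·Z - Z² into the span of the three quadrics -v·x + 2w·x - 5v·y - 8v·z + 5w·z - 2x·z + 5y·z + z², w² + w·x + 4w·y - x·y + y² + v·z + 4w·z - 2x·z - 9y·z - 12z², and 2w² + 3w·x + x² - v·y + 9w·y + 2x·y + 6y² + v·z + 12w·z + 5x·z + 3y·z - z². In particular, any common zero of the first three quadrics is mapped to a common zero of the last three. -/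
/-- The explicit linear change of variables sends the model of `X₀⁺(157)` used in
the paper to Galbraith's corrected model: each of Galbraith's three quadrics,
composed with the linear map, lies in the `ℚ`-span of the paper's three quadrics;
in particular, common zeros are mapped to common zeros. -/
theorem X0plus157_model_change :
    ∃ c : Fin 3 → Fin 3 → ℚ,
      ∀ V W X Y Z : ℚ,
        let v := 3 * V - W - X + Y + Z
        let w := 2 * V - 2 * X - 2 * Y + Z
        let x := -4 * V + 3 * X - Y - 3 * Z
        let y := -V + X + Y - Z
        let z := V - X + Z
        let q1 := V * X - V * Y + W * Y - X * Y + Y * Z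
        let q2 := V ^ 2 - V * W + W * X + W * Y + X * Y + V * Z - W * Z + X * Z
        let q3 := 2 * V * X + W * X - V * Y - X * Y - V * Z - W * Z + 2 * X * Z - Z ^ 2
        let g1 := -v * x + 2 * w * x - 5 * v * y - 8 * v * z + 5 * w * z - 2 * x * z
          + 5 * y * z + z ^ 2
        let g2 := w ^ 2 + w * x + 4 * w * y - x * y + y ^ 2 + v * z + 4 * w * z
          - 2 * x * z - 9 * y * z - 12 * z ^ 2
        let g3 := 2 * w ^ 2 + 3 * w * x + x ^ 2 - v * y + 9 * w * y + 2 * x * y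
          + 6 * y ^ 2 + v * z + 12 * w * z + 5 * x * z + 3 * y * z - z ^ 2
        (g1 = c 0 0 * q1 + c 0 1 * q2 + c 0 2 * q3 ∧
         g2 = c 1 0 * q1 + c 1 1 * q2 + c 1 2 * q3 ∧
         g3 = c 2 0 * q1 + c 2 1 * q2 + c 2 2 * q3) ∧
        (q1 = 0 ∧ q2 = 0 ∧ q3 = 0 → g1 = 0 ∧ g2 = 0 ∧ g3 = 0) := by
  refine ⟨!![3, 1, -1; -1, 1, 0; -1, 2, 0], fun V W X Y Z => ?_⟩
  intro v w x y z q1 q2 q3 g1 g2 g3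
  have span : g1 = 3 * q1 + q2 - q3 ∧ g2 = -q1 + q2 ∧ g3 = -q1 + 2 * q2 :=
    ⟨by ring, by ring, by ring⟩
  refine ⟨by simpa [sub_eq_add_neg] using span, ?_⟩
  rintro ⟨h1, h2, h3⟩
  simp [span, h1, h2, h3]
end

section
/- The projective curve in P² over Q defined by the homogenization of y³ + (50x³ + 32x² - 4x - 3)y² + (966x⁶ + 1377x⁵ + 459x⁴ - 115x³ - 66x² + x + 2)y + (7056x⁹ + 16128x⁸ + 12744x⁷ + 2856x⁶ - 1239x⁵ - 678x⁴ - 35x³ + 28x² + 4x) = 0 is irreducible over Q. -/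
/-!
Read the curve as a cubic in `y` over `R = ℚ[x, z]`: it is
`z⁶y³ + z⁴a y² + z²b y + c = M(z²y)` for the monic `M = Y³ + aY² + bY + c`, where `a, b, c` are
the homogenized coefficients. It is primitive because `z ∤ c`, so by Gauss's lemma it suffices
that it has no root in `Frac R`, where cubics are irreducible iff rootless. A root `r` would make
`z²r` a root of the monic `M`, hence an element of the integrally closed `R`; setting
`x = z = 1` then gives an integer root of `Y³ + 75Y² + 2624Y + 36864`, which has none mod 11.
-/

namespace Polynomial

theorem isPrimitive_of_isRelPrime_coeff {R : Type*} [CommRing R] {p : R[X]} {i j : ℕ}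
    (h : IsRelPrime (p.coeff i) (p.coeff j)) : p.IsPrimitive :=
  fun r hr => h ((C_dvd_iff_dvd_coeff r p).mp hr i) ((C_dvd_iff_dvd_coeff r p).mp hr j)

theorem Monic.not_isRoot_map_of_forall_not_isRoot {A K : Type*} [CommRing A] [IsDomain A]
    [IsIntegrallyClosed A] [Field K] [Algebra A K] [IsFractionRing A K] {p : A[X]}
    (hp : p.Monic) (h : ∀ a, ¬ p.IsRoot a) (x : K) : ¬ (p.map (algebraMap A K)).IsRoot x := by
  intro hx
  obtain ⟨a, rfl⟩ :=
    (IsIntegrallyClosed.isIntegral_iff (K := K)).mp ⟨p, hp, by rwa [eval₂_eq_eval_map]⟩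
  exact h a ((isRoot_map_iff (IsFractionRing.injective A K)).mp hx)

end Polynomial

namespace X0plus137

open Polynomial

noncomputable section

def specializedCubic : ℤ[X] := X ^ 3 + C 75 * X ^ 2 + C 2624 * X + C 36864

theorem specializedCubic_monic : specializedCubic.Monic := by
  unfold specializedCubic; monicity!

theorem specializedCubic_not_isRoot (n : ℤ) : ¬ specializedCubic.IsRoot n := by
  have no_root_mod_11 : ∀ u : ZMod 11, u ^ 3 + 75 * u ^ 2 + 2624 * u + 36864 ≠ 0 := by decide
  intro h
  exact no_root_mod_11 _ (by simpa [specializedCubic] using h.map (f := Int.castRingHom (ZMod 11)))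

abbrev R := MvPolynomial (Fin 2) ℚ

def x : R := MvPolynomial.X 0
def z : R := MvPolynomial.X 1

def a : R := 50 * x ^ 3 + 32 * x ^ 2 * z - 4 * x * z ^ 2 - 3 * z ^ 3
def b : R := 966 * x ^ 6 + 1377 * x ^ 5 * z + 459 * x ^ 4 * z ^ 2 - 115 * x ^ 3 * z ^ 3
    - 66 * x ^ 2 * z ^ 4 + x * z ^ 5 + 2 * z ^ 6
def c : R := 7056 * x ^ 9 + 16128 * x ^ 8 * z + 12744 * x ^ 7 * z ^ 2 + 2856 * x ^ 6 * z ^ 3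
    - 1239 * x ^ 5 * z ^ 4 - 678 * x ^ 4 * z ^ 5 - 35 * x ^ 3 * z ^ 6 + 28 * x ^ 2 * z ^ 7
    + 4 * x * z ^ 8

def reducedCubic : R[X] := X ^ 3 + C a * X ^ 2 + C b * X + C c

def model : R[X] := reducedCubic.comp (C (z ^ 2) * X)

theorem reducedCubic_monic : reducedCubic.Monic := by
  unfold reducedCubic; monicity!

theorem reducedCubic_map_eval_one_one :
    reducedCubic.map (MvPolynomial.eval ![1, 1]) = specializedCubic.map (algebraMap ℤ ℚ) := by
  have ha : MvPolynomial.eval ![1, 1] a = 75 := by norm_num [a, x, z]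
  have hb : MvPolynomial.eval ![1, 1] b = 2624 := by norm_num [b, x, z]
  have hc : MvPolynomial.eval ![1, 1] c = 36864 := by norm_num [c, x, z]
  simp [reducedCubic, specializedCubic, ha, hb, hc, map_ofNat]

theorem reducedCubic_not_isRoot (s : R) : ¬ reducedCubic.IsRoot s := by
  intro h
  have h11 := h.map (f := MvPolynomial.eval ![1, 1])
  rw [reducedCubic_map_eval_one_one] at h11
  exact specializedCubic_monic.not_isRoot_map_of_forall_not_isRoot specializedCubic_not_isRoot _ h11

theorem model_eq :
    model = C (z ^ 6) * X ^ 3 + C (z ^ 4 * a) * X ^ 2 + C (z ^ 2 * b) * X + C c := by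
  simp only [model, reducedCubic, add_comp, mul_comp, pow_comp, X_comp, C_comp, map_mul, map_pow]
  ring

theorem model_natDegree : model.natDegree = 3 := by
  rw [model_eq]; compute_degree!; exact MvPolynomial.X_ne_zero 1

theorem model_coeff_three : model.coeff 3 = z ^ 6 := by
  rw [model_eq]; simp only [coeff_add, coeff_C_mul_X_pow, coeff_C_mul_X, coeff_C]; norm_num

theorem model_coeff_zero : model.coeff 0 = c := by
  rw [model_eq]; simp only [coeff_add, coeff_C_mul_X_pow, coeff_C_mul_X, coeff_C]; norm_num

theorem isRelPrime_z_pow_c : IsRelPrime (z ^ 6) c := by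
  refine IsRelPrime.pow_left ((MvPolynomial.X_prime).irreducible.isRelPrime_iff_not_dvd.mpr ?_)
  rintro ⟨w, hw⟩
  have h := congrArg (MvPolynomial.eval ![1, 0]) hw
  simp [c, x, z] at h

theorem model_isPrimitive : model.IsPrimitive :=
  isPrimitive_of_isRelPrime_coeff (i := 3) (j := 0) <| by
    rw [model_coeff_three, model_coeff_zero]; exact isRelPrime_z_pow_c

theorem model_map_irreducible : Irreducible (model.map (algebraMap R (FractionRing R))) := by
  have hdeg : (model.map (algebraMap R (FractionRing R))).natDegree = 3 := by
    rw [natDegree_map_eq_of_injective (IsFractionRing.injective R _), model_natDegree]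
  refine irreducible_of_degree_le_three_of_not_isRoot (by simp [hdeg]) fun r hr => ?_
  refine reducedCubic_monic.not_isRoot_map_of_forall_not_isRoot reducedCubic_not_isRoot
    (algebraMap R _ (z ^ 2) * r) ?_
  simpa [model, Polynomial.map_comp, IsRoot, eval_comp] using hr

theorem model_irreducible : Irreducible model :=
  model_isPrimitive.irreducible_of_irreducible_map_of_injective
    (IsFractionRing.injective R (FractionRing R)) model_map_irreducible

def polynomialInY : MvPolynomial (Fin 3) ℚ ≃ₐ[ℚ] R[X] :=
  (MvPolynomial.renameEquiv ℚ (Equiv.swap 0 1)).trans (MvPolynomial.finSuccEquiv ℚ 2)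

@[simp]
theorem polynomialInY_C (q : ℚ) : polynomialInY (MvPolynomial.C q) = C (MvPolynomial.C q) :=
  polynomialInY.commutes q

@[simp]
theorem polynomialInY_X_zero : polynomialInY (MvPolynomial.X 0) = C x := by
  simpa [polynomialInY, x] using MvPolynomial.finSuccEquiv_X_succ (R := ℚ) (j := (0 : Fin 2))

@[simp]
theorem polynomialInY_X_one : polynomialInY (MvPolynomial.X 1) = X := by
  simpa [polynomialInY] using MvPolynomial.finSuccEquiv_X_zero (R := ℚ) (n := 2)

@[simp]
theorem polynomialInY_X_two : polynomialInY (MvPolynomial.X 2) = C z := by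
  simpa [polynomialInY, z, Equiv.swap_apply_of_ne_of_ne] using
    MvPolynomial.finSuccEquiv_X_succ (R := ℚ) (j := (1 : Fin 2))

theorem irreducible_of_polynomialInY_eq_model {P : MvPolynomial (Fin 3) ℚ}
    (h : polynomialInY P = model) : Irreducible P := by
  rw [← MulEquiv.irreducible_iff polynomialInY, h]
  exact model_irreducible

end

end X0plus137

open MvPolynomial in
/-- The homogeneous degree-9 polynomial in `ℚ[x, y, z]` obtained by homogenizing
the plane model `C_{137,1}` of `X₀⁺(137)`
`y³ + (50x³+32x²-4x-3)y² + (966x⁶+1377x⁵+459x⁴-115x³-66x²+x+2)y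
  + (7056x⁹+16128x⁸+12744x⁷+2856x⁶-1239x⁵-678x⁴-35x³+28x²+4x)`
is irreducible over `ℚ`; i.e. the projective plane curve it defines is
irreducible over `ℚ`. -/
theorem X0plus137_plane_model_irreducible :
    Irreducible
      ((C (1 : ℚ) * X 1 ^ 3 * X 2 ^ 6 +
      C (50) * X 0 ^ 3 * X 1 ^ 2 * X 2 ^ 4 +
      C (32) * X 0 ^ 2 * X 1 ^ 2 * X 2 ^ 5 +
      C (-4) * X 0 * X 1 ^ 2 * X 2 ^ 6 +
      C (-3) * X 1 ^ 2 * X 2 ^ 7 +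
      C (966) * X 0 ^ 6 * X 1 * X 2 ^ 2 +
      C (1377) * X 0 ^ 5 * X 1 * X 2 ^ 3 +
      C (459) * X 0 ^ 4 * X 1 * X 2 ^ 4 +
      C (-115) * X 0 ^ 3 * X 1 * X 2 ^ 5 +
      C (-66) * X 0 ^ 2 * X 1 * X 2 ^ 6 +
      C (1) * X 0 * X 1 * X 2 ^ 7 +
      C (2) * X 1 * X 2 ^ 8 +
      C (7056) * X 0 ^ 9 +
      C (16128) * X 0 ^ 8 * X 2 +
      C (12744) * X 0 ^ 7 * X 2 ^ 2 +
      C (2856) * X 0 ^ 6 * X 2 ^ 3 +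
      C (-1239) * X 0 ^ 5 * X 2 ^ 4 +
      C (-678) * X 0 ^ 4 * X 2 ^ 5 +
      C (-35) * X 0 ^ 3 * X 2 ^ 6 +
      C (28) * X 0 ^ 2 * X 2 ^ 7 +
      C (4) * X 0 * X 2 ^ 8 : MvPolynomial (Fin 3) ℚ)) := by
  apply X0plus137.irreducible_of_polynomialInY_eq_model
  simp [X0plus137.model_eq, X0plus137.a, X0plus137.b, X0plus137.c, map_ofNat]
  ring
end
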